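/- arXiv:1206.2829 — 2 statements merged into one kernel-verified Lean document; each statement's English description precedes it below -/
import Mathlib

section
/- Fix real t > 0, a natural number n, and real numbers H and R. For N > 0 set ǧ₀₀(N) = N/(2t³) + R/t + (n+1)/(2t²) and σ(N) = √(1/t + H²/(t²·ǧ₀₀(N))). Then, as N → ∞, the derivative of the canonical expanding soliton potential in the direction of the space-time unit normal, ν^Σ f̌ = H·N/(2t³·ǧ₀₀(N)·σ(N)), converges to H·√t. -/
/-!
Clearing denominators, `2t³·ǧ₀₀(N) = N + c` with `c = 2t²R + t(n+1)`, so the quotient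
`N / (2t³·ǧ₀₀(N))` tends to `1`. Since `ǧ₀₀(N) → ∞`, the term `H²/(t²ǧ₀₀(N))` disappears and
`σ(N) → √(1/t) = (√t)⁻¹`; hence `ν^Σ f̌ → H / (√t)⁻¹ = H√t`.
-/

open Filter Topology

lemma tendsto_div_add_const_atTop (c : ℝ) :
    Tendsto (fun x : ℝ => x / (x + c)) atTop (𝓝 1) := by
  have hshift : Tendsto (fun x : ℝ => x + c) atTop atTop :=
    tendsto_atTop_add_const_right _ c tendsto_id
  have hsmall : Tendsto (fun x : ℝ => 1 - c / (x + c)) atTop (𝓝 (1 - 0)) :=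
    tendsto_const_nhds.sub (tendsto_const_nhds.div_atTop hshift)
  rw [sub_zero] at hsmall
  refine hsmall.congr' ?_
  filter_upwards [hshift.eventually_ne_atTop 0] with x hx
  field_simp
  ring

namespace CanonicalExpandingSoliton

variable (t R : ℝ) (n : ℕ) (H : ℝ)

noncomputable def g00 (N : ℝ) : ℝ := N / (2 * t ^ 3) + R / t + ((n : ℝ) + 1) / (2 * t ^ 2)

noncomputable def sigma (N : ℝ) : ℝ := Real.sqrt (1 / t + H ^ 2 / (t ^ 2 * g00 t R n N))

variable {t}

lemma two_mul_pow_three_mul_g00 (ht : t ≠ 0) (N : ℝ) :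
    2 * t ^ 3 * g00 t R n N = N + (2 * t ^ 2 * R + t * ((n : ℝ) + 1)) := by
  unfold g00
  field_simp
  ring

lemma tendsto_g00_atTop (ht : 0 < t) : Tendsto (g00 t R n) atTop atTop := by
  unfold g00
  refine tendsto_atTop_add_const_right _ _ (tendsto_atTop_add_const_right _ _ ?_)
  exact tendsto_id.atTop_div_const (by positivity)

lemma tendsto_div_two_mul_pow_three_mul_g00 (ht : 0 < t) :
    Tendsto (fun N => N / (2 * t ^ 3 * g00 t R n N)) atTop (𝓝 1) := by
  simpa only [two_mul_pow_three_mul_g00 R n ht.ne'] using tendsto_div_add_const_atTop _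

lemma tendsto_sigma (ht : 0 < t) : Tendsto (sigma t R n H) atTop (𝓝 (Real.sqrt t)⁻¹) := by
  have hdenom : Tendsto (fun N => t ^ 2 * g00 t R n N) atTop atTop :=
    (tendsto_g00_atTop R n ht).const_mul_atTop (by positivity)
  have hradicand :
      Tendsto (fun N => 1 / t + H ^ 2 / (t ^ 2 * g00 t R n N)) atTop (𝓝 (1 / t + 0)) :=
    tendsto_const_nhds.add (tendsto_const_nhds.div_atTop hdenom)
  have hlimit : Real.sqrt (1 / t + 0) = (Real.sqrt t)⁻¹ := by
    rw [add_zero, one_div, Real.sqrt_inv]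
  rw [← hlimit]
  exact hradicand.sqrt

end CanonicalExpandingSoliton

/-- For the canonical expanding Ricci soliton with time-time component
`ǧ₀₀(N) = N/(2t³) + R/t + (n+1)/(2t²)`, potential `f̌ = −N/(2t)` and normal
normalizing factor `σ(N) = √(1/t + H²/(t²·ǧ₀₀(N)))`, the normal derivative of
the potential `ν^Σ f̌ = H·N/(2t³·ǧ₀₀(N)·σ(N))` converges to `H·√t` as `N → ∞`. -/
theorem stmt_5 (t : ℝ) (ht : 0 < t) (n : ℕ) (H R : ℝ) :
    Tendsto
      (fun N : ℝ =>
        H * N / (2 * t ^ 3 * (N / (2 * t ^ 3) + R / t + ((n : ℝ) + 1) / (2 * t ^ 2)) *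
          Real.sqrt (1 / t +
            H ^ 2 / (t ^ 2 * (N / (2 * t ^ 3) + R / t + ((n : ℝ) + 1) / (2 * t ^ 2))))))
      atTop (𝓝 (H * Real.sqrt t)) := by
  open CanonicalExpandingSoliton in
  have hlim := ((tendsto_div_two_mul_pow_three_mul_g00 R n ht).const_mul H).div
    (tendsto_sigma R n H ht) (by positivity)
  rw [mul_one, div_inv_eq_mul] at hlim
  refine hlim.congr fun N => ?_
  simp only [Pi.div_apply, CanonicalExpandingSoliton.sigma, CanonicalExpandingSoliton.g00,
    mul_div_assoc, div_div]
end

section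
/- Fix real t > 0, a natural number n, and real numbers H and R. For N > 0 set ǧ₀₀(N) = N/(2t³) + R/t + (n+1)/(2t²) and σ(N) = √(1/t + H²/(t²·ǧ₀₀(N))). Then, as N → ∞, the quantity N·(H/σ(N) − H·N/(2t³·ǧ₀₀(N)·σ(N))) converges to H·t^{3/2}·(2tR + n + 1). In particular the soliton defect Ě(N) = H^Σ − ν^Σ f̌ = H/σ(N) − H·N/(2t³·ǧ₀₀(N)·σ(N)) satisfies N·|Ě(N)| bounded as N → ∞, which is the scalar core of the statement that the space-time track of the mean curvature flow is an approximate soliton inside the canonical expanding Ricci soliton (Theorem 3.1). -/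
open Filter Topology

/-!
Write `ǧ₀₀(N) = N / p + c` with `p = 2t³` and `c = R/t + (n+1)/(2t²)`. Since `p·ǧ₀₀(N) − N = p·c`,
the two terms of the defect cancel to leading order and `Ě(N) = H·c / (ǧ₀₀(N)·σ(N))` exactly.
As `N → ∞` we have `N / ǧ₀₀(N) → p` and `σ(N) → √(1/t)`, so `N·Ě(N) → 2t³·H·c·√t`, which is the
stated limit.
-/

lemma tendsto_div_const_add_const_atTop {p : ℝ} (hp : 0 < p) (c : ℝ) :
    Tendsto (fun N : ℝ => N / p + c) atTop atTop :=
  tendsto_atTop_add_const_right atTop c (tendsto_id.atTop_div_const hp)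

lemma tendsto_div_div_const_add_const {p : ℝ} (hp : 0 < p) (c : ℝ) :
    Tendsto (fun N : ℝ => N / (N / p + c)) atTop (𝓝 p) := by
  have hlim : Tendsto (fun N : ℝ => (p⁻¹ + c * N⁻¹)⁻¹) atTop (𝓝 (p⁻¹ + c * 0)⁻¹) :=
    (tendsto_const_nhds.add (tendsto_inv_atTop_zero.const_mul c)).inv₀ (by simp [hp.ne'])
  rw [mul_zero, add_zero, inv_inv] at hlim
  refine hlim.congr' ?_
  filter_upwards [eventually_ne_atTop 0] with N hN
  rw [← inv_div, add_div, div_div_cancel_left' hN, div_eq_mul_inv c N]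

lemma tendsto_sqrt_add_div_const_mul {α : Type*} {l : Filter α} {g : α → ℝ} {k : ℝ}
    (hk : 0 < k) (hg : Tendsto g l atTop) (a b : ℝ) :
    Tendsto (fun x => √(a + b / (k * g x))) l (𝓝 √a) := by
  have hvanish : Tendsto (fun x => b / (k * g x)) l (𝓝 0) :=
    tendsto_const_nhds.div_atTop (hg.const_mul_atTop hk)
  simpa using (tendsto_const_nhds.add hvanish).sqrt

lemma div_sub_mul_div_eq_of_mul_eq_add {p g N c H s : ℝ} (hp : p ≠ 0) (hg : g ≠ 0)
    (hpg : p * g = N + p * c) :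
    H / s - H * N / (p * g * s) = H * c / (g * s) := by
  rcases eq_or_ne s 0 with rfl | hs
  · simp
  field_simp
  linear_combination H * hpg

lemma tendsto_mul_div_sub_mul_div {p c s : ℝ} {g σ : ℝ → ℝ} (hp : 0 < p)
    (hg : ∀ N, g N = N / p + c) (hσ : Tendsto σ atTop (𝓝 s)) (hs : s ≠ 0) (H : ℝ) :
    Tendsto (fun N => N * (H / σ N - H * N / (p * g N * σ N))) atTop (𝓝 (p * (H * c) / s)) := by
  have hNg : Tendsto (fun N => N / g N) atTop (𝓝 p) := by
    simpa only [hg] using tendsto_div_div_const_add_const hp c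
  have hgpos : ∀ᶠ N in atTop, 0 < g N := by
    simpa only [hg] using (tendsto_div_const_add_const_atTop hp c).eventually_gt_atTop 0
  refine ((hNg.mul_const (H * c)).div hσ hs).congr' ?_
  filter_upwards [hgpos] with N hN
  have hpg : p * g N = N + p * c := by rw [hg N]; field_simp
  rw [Pi.div_apply, div_sub_mul_div_eq_of_mul_eq_add hp.ne' hN.ne' hpg]
  ring

lemma exists_eventually_mul_abs_le_of_tendsto {f : ℝ → ℝ} {L : ℝ}
    (hf : Tendsto (fun N => N * f N) atTop (𝓝 L)) :
    ∃ C, ∀ᶠ N in atTop, N * |f N| ≤ C := by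
  refine ⟨|L| + 1, ?_⟩
  filter_upwards [hf.abs.eventually (eventually_le_nhds (lt_add_one |L|)),
    eventually_ge_atTop 0] with N hbound hN
  rwa [abs_mul, abs_of_nonneg hN] at hbound

/-- Scalar core of Theorem 3.1: with `ǧ₀₀(N) = N/(2t³) + R/t + (n+1)/(2t²)` and
`σ(N) = √(1/t + H²/(t²·ǧ₀₀(N)))`, the soliton defect
`Ě(N) = H/σ(N) − H·N/(2t³·ǧ₀₀(N)·σ(N))` satisfies
`N·Ě(N) → H·t^{3/2}·(2tR + n + 1)` as `N → ∞`; in particular `N·|Ě(N)|` is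
eventually bounded. -/
theorem stmt_6 (t : ℝ) (ht : 0 < t) (n : ℕ) (H R : ℝ) :
    Tendsto
      (fun N : ℝ =>
        N * (H / Real.sqrt (1 / t +
              H ^ 2 / (t ^ 2 * (N / (2 * t ^ 3) + R / t + ((n : ℝ) + 1) / (2 * t ^ 2)))) -
          H * N / (2 * t ^ 3 * (N / (2 * t ^ 3) + R / t + ((n : ℝ) + 1) / (2 * t ^ 2)) *
            Real.sqrt (1 / t +
              H ^ 2 / (t ^ 2 * (N / (2 * t ^ 3) + R / t + ((n : ℝ) + 1) / (2 * t ^ 2)))))))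
      atTop (𝓝 (H * t ^ ((3 : ℝ) / 2) * (2 * t * R + (n : ℝ) + 1))) ∧
    ∃ C : ℝ, ∀ᶠ N : ℝ in atTop,
      N * |H / Real.sqrt (1 / t +
              H ^ 2 / (t ^ 2 * (N / (2 * t ^ 3) + R / t + ((n : ℝ) + 1) / (2 * t ^ 2)))) -
          H * N / (2 * t ^ 3 * (N / (2 * t ^ 3) + R / t + ((n : ℝ) + 1) / (2 * t ^ 2)) *
            Real.sqrt (1 / t +
              H ^ 2 / (t ^ 2 * (N / (2 * t ^ 3) + R / t + ((n : ℝ) + 1) / (2 * t ^ 2)))))| ≤ C := by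
  set c := R / t + ((n : ℝ) + 1) / (2 * t ^ 2) with hc
  have hg (N : ℝ) : N / (2 * t ^ 3) + R / t + ((n : ℝ) + 1) / (2 * t ^ 2) = N / (2 * t ^ 3) + c :=
    add_assoc _ _ _
  have hσ := tendsto_sqrt_add_div_const_mul (pow_pos ht 2)
    ((tendsto_div_const_add_const_atTop (by positivity) c).congr fun N => (hg N).symm)
    (1 / t) (H ^ 2)
  have hlim : 2 * t ^ 3 * (H * c) / √(1 / t) = H * t ^ ((3 : ℝ) / 2) * (2 * t * R + n + 1) := by
    rw [show (3 : ℝ) / 2 = 1 + 1 / 2 by norm_num, Real.rpow_add ht, Real.rpow_one,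
      ← Real.sqrt_eq_rpow, one_div, Real.sqrt_inv]
    have : √t ≠ 0 := (Real.sqrt_pos.mpr ht).ne'
    rw [hc]
    field_simp
    ring
  have hmain := tendsto_mul_div_sub_mul_div (by positivity) hg hσ
    (Real.sqrt_pos.mpr (by positivity)).ne' H
  rw [hlim] at hmain
  exact ⟨hmain, exists_eventually_mul_abs_le_of_tendsto hmain⟩
end
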